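/- In the example G = ⟨σ₁,σ₂,σ₃⟩ ≅ (Z/2Z)³ acting on V = F₂⁴ as above, the direct summand property fails: for the ideal J = (x₁, x₂) of k[V]^G, the invariant f₃ = x₁x₃(x₁+x₃) + x₂x₄(x₂+x₄) lies in the contraction (J·k[V]) ∩ k[V]^G but not in J, so J ≠ J^{ec}; hence there is no surjective k[V]^G-linear projection k[V] → k[V]^G. Equivalently, Tr^G(f/θ_G) = 0 for every f ∈ k[V] of degree 3, where θ_G = x₁x₂(x₁+x₂). -/

import Mathlib

open MvPolynomial

set_option synthInstance.maxHeartbeats 1000000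
set_option maxHeartbeats 1000000

variable {k : Type*} [Field k] {ι : Type*} [Fintype ι] [DecidableEq ι]

noncomputable def galAct (M : Matrix.GeneralLinearGroup ι k) :
    MvPolynomial ι k →ₐ[k] MvPolynomial ι k :=
  aeval fun i => ∑ j, (((M⁻¹ : Matrix.GeneralLinearGroup ι k) : Matrix ι ι k) i j) • X j

def invariants (G : Subgroup (Matrix.GeneralLinearGroup ι k)) :
    Subalgebra k (MvPolynomial ι k) where
  carrier := {p | ∀ σ ∈ G, galAct σ p = p}
  mul_mem' := fun ha hb σ hσ => by rw [map_mul, ha σ hσ, hb σ hσ]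
  add_mem' := fun ha hb σ hσ => by rw [map_add, ha σ hσ, hb σ hσ]
  algebraMap_mem' := fun r σ hσ => by simp [galAct]

noncomputable def fixedSpace (M : Matrix.GeneralLinearGroup ι k) : Submodule k (ι → k) :=
  LinearMap.ker (Matrix.mulVecLin ((M : Matrix ι ι k) - 1))

noncomputable def moveSpace (M : Matrix.GeneralLinearGroup ι k) : Submodule k (ι → k) :=
  LinearMap.range (Matrix.mulVecLin ((M : Matrix ι ι k) - 1))

def IsPseudoReflection (M : Matrix.GeneralLinearGroup ι k) : Prop :=
  Module.finrank k (moveSpace M) = 1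

def IsTransvection (M : Matrix.GeneralLinearGroup ι k) : Prop :=
  IsPseudoReflection M ∧ moveSpace M ≤ fixedSpace M

noncomputable def linForm (y : Module.Dual k (ι → k)) : MvPolynomial ι k :=
  ∑ i, C (y (Pi.single i 1)) * X i

noncomputable def hilbertIdeal (G : Subgroup (Matrix.GeneralLinearGroup ι k)) :
    Ideal (MvPolynomial ι k) :=
  Ideal.span {p | p ∈ invariants G ∧ ∃ d, 0 < d ∧ p.IsHomogeneous d}

def DSP (G : Subgroup (Matrix.GeneralLinearGroup ι k)) : Prop :=
  ∃ π : MvPolynomial ι k →ₗ[↥(invariants G)] ↥(invariants G),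
    Function.Surjective π ∧
    ∀ (p : MvPolynomial ι k) (d : ℕ), p.IsHomogeneous d →
      ((π p : MvPolynomial ι k)).IsHomogeneous d

noncomputable def fixedSubmodule (G : Subgroup (Matrix.GeneralLinearGroup ι k)) :
    Submodule k (ι → k) := ⨅ σ ∈ G, fixedSpace σ

/-- `σ₁ = I + E₃₁` over `F₂`. -/
def M1 : Matrix (Fin 4) (Fin 4) (ZMod 2) := !![1,0,0,0; 0,1,0,0; 1,0,1,0; 0,0,0,1]
/-- `σ₂ = I + E₄₂` over `F₂`. -/
def M2 : Matrix (Fin 4) (Fin 4) (ZMod 2) := !![1,0,0,0; 0,1,0,0; 0,0,1,0; 0,1,0,1]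
/-- `σ₃ = I + E₃₁ + E₃₂ + E₄₁ + E₄₂` over `F₂`. -/
def M3 : Matrix (Fin 4) (Fin 4) (ZMod 2) := !![1,0,0,0; 0,1,0,0; 1,1,1,0; 1,1,0,1]

def s1 : Matrix.GeneralLinearGroup (Fin 4) (ZMod 2) := ⟨M1, M1, by decide, by decide⟩
def s2 : Matrix.GeneralLinearGroup (Fin 4) (ZMod 2) := ⟨M2, M2, by decide, by decide⟩
def s3 : Matrix.GeneralLinearGroup (Fin 4) (ZMod 2) := ⟨M3, M3, by decide, by decide⟩

/-- The invariant `f₃ = x₁x₃(x₁+x₃) + x₂x₄(x₂+x₄)`. -/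
noncomputable def f₃ : MvPolynomial (Fin 4) (ZMod 2) :=
  X 0 * X 2 * (X 0 + X 2) + X 1 * X 3 * (X 1 + X 3)

/-!
Write `q = x₃(x₁ + x₃)`, so that `f₃ = x₁ q + x₂ x₄(x₂ + x₄)`. If `f₃ = a x₁ + b x₂` with `a`
invariant, then `x₂ ∣ (a - q) x₁`, and since `x₂` is prime, `a = q + x₂ ℓ`. Now `q` is fixed by
`σ₁, σ₂` while `σ₃ q = q + x₂(x₁ + x₂)`, so cancelling `x₂` gives `σ₁ ℓ = σ₂ ℓ = ℓ` and
`σ₃ ℓ = ℓ - (x₁ + x₂)`. The action is linear, so it commutes with taking homogeneous components,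
and the linear part of `ℓ` satisfies the same three equations; evaluating that linear form at
`e₁` and `e₂` shows that this is impossible. Finally, a surjective `k[V]^G`-linear map
`π : k[V] → k[V]^G` gives `J^{ec} = J` for every ideal `J`: if `π u = 1` then `x = π (x u)`.
-/

namespace MvPolynomial

variable {σ τ R : Type*} [CommSemiring R]

theorem aeval_homogeneousComponent {g : σ → MvPolynomial τ R} (hg : ∀ i, (g i).IsHomogeneous 1)
    (n : ℕ) (p : MvPolynomial σ R) :
    aeval g (homogeneousComponent n p) = homogeneousComponent n (aeval g p) := by
  induction p using MvPolynomial.induction_on' with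
  | monomial d c =>
    have hd : (aeval g (monomial d c)).IsHomogeneous d.degree := by
      simpa using (isHomogeneous_monomial c rfl).aeval g hg
    rw [homogeneousComponent_of_mem (isHomogeneous_monomial c rfl), homogeneousComponent_of_mem hd]
    split_ifs <;> simp
  | add p q hp hq => simp only [map_add, hp, hq]

theorem IsHomogeneous.eval_add {ℓ : MvPolynomial σ R} (hℓ : ℓ.IsHomogeneous 1) (v w : σ → R) :
    eval (v + w) ℓ = eval v ℓ + eval w ℓ := by
  have hmem : ℓ ∈ Submodule.span R (Set.range X) := by
    rw [← homogeneousSubmodule_one_eq_span_X]; exact hℓ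
  clear hℓ
  induction hmem using Submodule.span_induction with
  | mem x hx => obtain ⟨i, rfl⟩ := hx; simp
  | zero => simp only [map_zero, add_zero]
  | add x y _ _ hx hy => simp only [map_add, hx, hy]; ring
  | smul c x _ hx => simp only [smul_eval, hx, mul_add]

end MvPolynomial

theorem Ideal.comap_map_eq_self_of_surjective_linearMap {R S : Type*} [CommRing R] [CommRing S]
    [Algebra R S] {π : S →ₗ[R] R} (hπ : Function.Surjective π) (J : Ideal R) :
    (J.map (algebraMap R S)).comap (algebraMap R S) = J := by
  refine le_antisymm (fun x hx => ?_) Ideal.le_comap_map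
  have key : ∀ y ∈ J.map (algebraMap R S), ∀ s, π (s * y) ∈ J := by
    intro y hy
    induction hy using Submodule.span_induction with
    | mem y hy =>
      obtain ⟨j, hj, rfl⟩ := hy
      intro s
      rw [mul_comm, ← Algebra.smul_def, map_smul]
      exact J.mul_mem_right _ hj
    | zero => simp
    | add y z _ _ hy hz => intro s; rw [mul_add, map_add]; exact J.add_mem (hy s) (hz s)
    | smul t y _ hy => intro s; rw [smul_eq_mul, ← mul_assoc]; exact hy _
  obtain ⟨u, hu⟩ := hπ 1
  have hx' : x = π (u * algebraMap R S x) := by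
    rw [mul_comm, ← Algebra.smul_def, map_smul, hu, smul_eq_mul, mul_one]
  exact hx' ▸ key _ hx u

theorem galAct_X (M : Matrix.GeneralLinearGroup ι k) (i : ι) :
    galAct M (X i) = ∑ j, (((M⁻¹ : Matrix.GeneralLinearGroup ι k) : Matrix ι ι k) i j) • X j :=
  aeval_X _ _

theorem galAct_one (p : MvPolynomial ι k) : galAct 1 p = p := by
  simp [galAct, Matrix.one_apply, ite_smul]

theorem galAct_mul (M N : Matrix.GeneralLinearGroup ι k) (p : MvPolynomial ι k) :
    galAct (M * N) p = galAct M (galAct N p) := by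
  rw [← AlgHom.comp_apply]
  congr 1
  refine MvPolynomial.algHom_ext fun i => ?_
  simp only [AlgHom.comp_apply, galAct_X, map_sum, map_smul, mul_inv_rev, Units.val_mul,
    Matrix.mul_apply, Finset.sum_smul, Finset.smul_sum, mul_smul]
  exact Finset.sum_comm

theorem mem_invariants_closure_iff {S : Set (Matrix.GeneralLinearGroup ι k)}
    {p : MvPolynomial ι k} : p ∈ invariants (Subgroup.closure S) ↔ ∀ σ ∈ S, galAct σ p = p := by
  refine ⟨fun h σ hσ => h σ (Subgroup.subset_closure hσ), fun h σ hσ => ?_⟩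
  induction hσ using Subgroup.closure_induction with
  | mem σ hσ => exact h σ hσ
  | one => exact galAct_one p
  | mul σ τ _ _ hσ hτ => rw [galAct_mul, hτ, hσ]
  | inv σ _ hσ => rw [← congrArg (galAct σ⁻¹) hσ, ← galAct_mul, inv_mul_cancel, galAct_one]

theorem galAct_homogeneousComponent (M : Matrix.GeneralLinearGroup ι k) (n : ℕ)
    (p : MvPolynomial ι k) :
    galAct M (homogeneousComponent n p) = homogeneousComponent n (galAct M p) :=
  aeval_homogeneousComponent (fun _ => IsHomogeneous.sum _ _ _ fun j _ => by
    simpa only [smul_eq_C_mul] using isHomogeneous_C_mul_X _ j) n p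

theorem eval_galAct (M : Matrix.GeneralLinearGroup ι k) (v : ι → k) (p : MvPolynomial ι k) :
    eval v (galAct M p) = eval (Matrix.mulVec (M⁻¹ : Matrix.GeneralLinearGroup ι k) v) p := by
  rw [galAct, aeval_eq_bind₁, eval, eval₂Hom_bind₁]
  congr 2
  funext i
  simp [Matrix.mulVec, dotProduct]

theorem galAct_eq_sub_of_galAct_add_X_mul {M : Matrix.GeneralLinearGroup ι k} {i : ι}
    {q r ℓ : MvPolynomial ι k} (hX : galAct M (X i) = X i) (hq : galAct M q = q + X i * r)
    (h : galAct M (q + X i * ℓ) = q + X i * ℓ) : galAct M ℓ = ℓ - r := by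
  refine mul_left_cancel₀ (X_ne_zero i) ?_
  rw [map_add, map_mul, hX, hq] at h
  linear_combination h

theorem MvPolynomial.exists_eq_add_X_mul_of_mul_X_add_mul_X_eq {σ R : Type*} [CommRing R]
    [IsDomain R] {i j : σ} (hij : i ≠ j) {a b q q' : MvPolynomial σ R}
    (h : a * X j + b * X i = q * X j + q' * X i) : ∃ ℓ, a = q + X i * ℓ := by
  have hdvd : X i ∣ (a - q) * X j := ⟨q' - b, by linear_combination h⟩
  rcases X_prime.dvd_or_dvd hdvd with ⟨ℓ, hℓ⟩ | hX
  · exact ⟨ℓ, by linear_combination hℓ⟩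
  · exact absurd (X_dvd_X.mp hX) hij

theorem galAct_s1 : galAct s1 = aeval ![X 0, X 1, X 0 + X 2, X 3] :=
  algHom_ext fun i => by fin_cases i <;> simp [galAct_X, Fin.sum_univ_four, s1, M1, Units.inv_mk]

theorem galAct_s2 : galAct s2 = aeval ![X 0, X 1, X 2, X 1 + X 3] :=
  algHom_ext fun i => by fin_cases i <;> simp [galAct_X, Fin.sum_univ_four, s2, M2, Units.inv_mk]

theorem galAct_s3 : galAct s3 = aeval ![X 0, X 1, X 0 + X 1 + X 2, X 0 + X 1 + X 3] :=
  algHom_ext fun i => by fin_cases i <;> simp [galAct_X, Fin.sum_univ_four, s3, M3, Units.inv_mk]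

theorem X_zero_mem_invariants : X 0 ∈ invariants (Subgroup.closure {s1, s2, s3}) := by
  simp [mem_invariants_closure_iff, galAct_s1, galAct_s2, galAct_s3]

theorem X_one_mem_invariants : X 1 ∈ invariants (Subgroup.closure {s1, s2, s3}) := by
  simp [mem_invariants_closure_iff, galAct_s1, galAct_s2, galAct_s3]

theorem f₃_mem_invariants : f₃ ∈ invariants (Subgroup.closure {s1, s2, s3}) := by
  simp only [mem_invariants_closure_iff, Set.mem_insert_iff, Set.mem_singleton_iff,
    forall_eq_or_imp, forall_eq]
  refine ⟨?_, ?_, ?_⟩ <;>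
    simp only [galAct_s1, galAct_s2, galAct_s3, f₃, map_add, map_mul, aeval_X, Matrix.cons_val] <;>
    grind

theorem galAct_s3_ne_sub_of_isHomogeneous {ℓ : MvPolynomial (Fin 4) (ZMod 2)}
    (hℓ : ℓ.IsHomogeneous 1) (h1 : galAct s1 ℓ = ℓ) (h2 : galAct s2 ℓ = ℓ) :
    galAct s3 ℓ ≠ ℓ - (X 0 + X 1) := by
  intro h3
  let e : Fin 4 → Fin 4 → ZMod 2 := fun i => Pi.single i 1
  have e1 := congrArg (eval (e 0)) h1
  have e2 := congrArg (eval (e 1)) h2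
  have e3 := congrArg (eval (e 0)) h3
  rw [eval_galAct, show Matrix.mulVec (s1⁻¹ : Matrix.GeneralLinearGroup (Fin 4) (ZMod 2)) (e 0)
    = e 0 + e 2 by decide, hℓ.eval_add] at e1
  rw [eval_galAct, show Matrix.mulVec (s2⁻¹ : Matrix.GeneralLinearGroup (Fin 4) (ZMod 2)) (e 1)
    = e 1 + e 3 by decide, hℓ.eval_add] at e2
  rw [eval_galAct, show Matrix.mulVec (s3⁻¹ : Matrix.GeneralLinearGroup (Fin 4) (ZMod 2)) (e 0)
    = e 0 + (e 2 + e 3) by decide, hℓ.eval_add, hℓ.eval_add] at e3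
  simp only [e, map_sub, map_add, eval_X, Pi.single_eq_same, Pi.single_eq_of_ne one_ne_zero,
    add_zero] at e3
  exact one_ne_zero (by linear_combination e3 - e1 - e2 : (1 : ZMod 2) = 0)

theorem mul_X_zero_add_mul_X_one_ne_f₃ {a : MvPolynomial (Fin 4) (ZMod 2)}
    (h1 : galAct s1 a = a) (h2 : galAct s2 a = a) (h3 : galAct s3 a = a)
    (b : MvPolynomial (Fin 4) (ZMod 2)) : a * X 0 + b * X 1 ≠ f₃ := by
  intro h
  have h' : a * X 0 + b * X 1 = X 2 * (X 0 + X 2) * X 0 + X 3 * (X 1 + X 3) * X 1 := by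
    rw [h, f₃]; ring
  obtain ⟨ℓ, rfl⟩ := exists_eq_add_X_mul_of_mul_X_add_mul_X_eq (by decide) h'
  have hℓ1 : galAct s1 ℓ = ℓ := by
    simpa using galAct_eq_sub_of_galAct_add_X_mul (r := 0) (by simp [galAct_s1])
      (by simp only [galAct_s1, map_add, map_mul, aeval_X, Matrix.cons_val]; grind) h1
  have hℓ2 : galAct s2 ℓ = ℓ := by
    simpa using galAct_eq_sub_of_galAct_add_X_mul (r := 0) (by simp [galAct_s2])
      (by simp [galAct_s2]) h2
  have hℓ3 : galAct s3 ℓ = ℓ - (X 0 + X 1) :=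
    galAct_eq_sub_of_galAct_add_X_mul (by simp [galAct_s3])
      (by simp only [galAct_s3, map_add, map_mul, aeval_X, Matrix.cons_val]; grind) h3
  refine galAct_s3_ne_sub_of_isHomogeneous (homogeneousComponent_isHomogeneous 1 ℓ)
    (by rw [galAct_homogeneousComponent, hℓ1]) (by rw [galAct_homogeneousComponent, hℓ2]) ?_
  rw [galAct_homogeneousComponent, hℓ3, map_sub,
    homogeneousComponent_eq_self ((isHomogeneous_X _ 0).add (isHomogeneous_X _ 1))]

theorem f₃_mem_comap_map_span {G : Subgroup (Matrix.GeneralLinearGroup (Fin 4) (ZMod 2))}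
    (h0 : X 0 ∈ invariants G) (h1 : X 1 ∈ invariants G) (hf : f₃ ∈ invariants G) :
    (⟨f₃, hf⟩ : invariants G) ∈ ((Ideal.span {⟨X 0, h0⟩, ⟨X 1, h1⟩}).map
      (algebraMap (invariants G) (MvPolynomial (Fin 4) (ZMod 2)))).comap
        (algebraMap (invariants G) (MvPolynomial (Fin 4) (ZMod 2))) := by
  rw [Ideal.mem_comap, Ideal.map_span, Set.image_pair]
  change f₃ ∈ Ideal.span {X 0, X 1}
  rw [Ideal.mem_span_pair]
  exact ⟨X 2 * (X 0 + X 2), X 3 * (X 1 + X 3), by simp only [f₃]; ring⟩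

theorem f₃_notMem_span (h0 : X 0 ∈ invariants (Subgroup.closure {s1, s2, s3}))
    (h1 : X 1 ∈ invariants (Subgroup.closure {s1, s2, s3}))
    (hf : f₃ ∈ invariants (Subgroup.closure {s1, s2, s3})) :
    (⟨f₃, hf⟩ : invariants (Subgroup.closure {s1, s2, s3})) ∉
      Ideal.span {⟨X 0, h0⟩, ⟨X 1, h1⟩} := by
  rw [Ideal.mem_span_pair]
  rintro ⟨a, b, hab⟩
  have ha := mem_invariants_closure_iff.mp a.2
  exact mul_X_zero_add_mul_X_one_ne_f₃ (ha s1 (by simp)) (ha s2 (by simp)) (ha s3 (by simp)) b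
    (congrArg Subtype.val hab)

/-- In the example `G = ⟨σ₁,σ₂,σ₃⟩ ≅ (ℤ/2ℤ)³` acting on `V = F₂⁴`, the
direct summand property fails: `x₁`, `x₂` and `f₃ = x₁x₃(x₁+x₃) + x₂x₄(x₂+x₄)` are
invariants, and for the ideal `J = (x₁, x₂)` of `k[V]^G` the invariant `f₃` lies in the
contraction `(J·k[V]) ∩ k[V]^G` of the extension of `J` but not in `J`, so `J ≠ J^{ec}`;
hence there is no surjective `k[V]^G`-linear map `k[V] → k[V]^G`. -/
theorem statement19 (G : Subgroup (Matrix.GeneralLinearGroup (Fin 4) (ZMod 2)))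
    (hG : G = Subgroup.closure {s1, s2, s3}) :
    (X 0 ∈ invariants G ∧ X 1 ∈ invariants G ∧ f₃ ∈ invariants G) ∧
    (∀ (h0 : X 0 ∈ invariants G) (h1 : X 1 ∈ invariants G) (hf : f₃ ∈ invariants G),
      (⟨f₃, hf⟩ : ↥(invariants G)) ∈
          Ideal.comap (algebraMap ↥(invariants G) (MvPolynomial (Fin 4) (ZMod 2)))
            (Ideal.map (algebraMap ↥(invariants G) (MvPolynomial (Fin 4) (ZMod 2)))
              (Ideal.span {(⟨X 0, h0⟩ : ↥(invariants G)), ⟨X 1, h1⟩})) ∧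
        (⟨f₃, hf⟩ : ↥(invariants G)) ∉
          Ideal.span {(⟨X 0, h0⟩ : ↥(invariants G)), (⟨X 1, h1⟩ : ↥(invariants G))}) ∧
    ¬ ∃ π : MvPolynomial (Fin 4) (ZMod 2) →ₗ[↥(invariants G)] ↥(invariants G),
        Function.Surjective π := by
  subst hG
  have h0 := X_zero_mem_invariants
  have h1 := X_one_mem_invariants
  have hf := f₃_mem_invariants
  refine ⟨⟨h0, h1, hf⟩,
    fun h0 h1 hf => ⟨f₃_mem_comap_map_span h0 h1 hf, f₃_notMem_span h0 h1 hf⟩, ?_⟩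
  rintro ⟨π, hπ⟩
  exact f₃_notMem_span h0 h1 hf
    ((Ideal.comap_map_eq_self_of_surjective_linearMap hπ _).le (f₃_mem_comap_map_span h0 h1 hf))
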